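/- Let m ≥ 1 and let U be the incidence matrix of a symmetric 2-(4m−1, 2m−1, m−1) design, i.e. a (4m−1)×(4m−1) matrix with entries in {0,1} having exactly 2m−1 ones in every row and every column and satisfying U Uᵀ = m·I + (m−1)·J. Let ε ∈ {1, −1} and set a = −1 + 1/(2m) + ε·i·√(4m−1)/(2m). Then the matrix obtained from U by replacing every 0 entry with a is a complex Hadamard matrix of order 4m−1. -/

import Mathlib

open Matrix

/-- `H` is a complex Hadamard matrix: unimodular entries and `H Hᴴ = n • I`. -/
def IsCHadamard {n : Type*} [Fintype n] [DecidableEq n] (H : Matrix n n ℂ) : Prop :=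
  (∀ i j, ‖H i j‖ = 1) ∧
    H * H.conjTranspose = (Fintype.card n : ℂ) • 1

/-!
With `J` the all-ones matrix, filling the zeros of the 0/1 matrix `U` with `a` gives
`H = (1 - a) U + a J`. If `|a| = 1`, `U` has row sums `k` and `U Uᵀ = μ I + ν J` with order `v`,
then `H Hᴴ = (2 - 2 Re a) (μ I + (ν - k) J) + v J`. For the design `ν - k = -μ`, and `a` is the
unimodular number with `2 - 2 Re a = v / μ = (4m - 1) / m`, so the `J` term cancels.
-/

namespace Matrix

variable {l m n R : Type*}

theorem mul_of_one_of_sum_row [Fintype n] [NonAssocSemiring R] {A : Matrix m n R} {k : R}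
    (hrow : ∀ i, ∑ j, A i j = k) :
    A * of (fun _ _ => 1 : n → l → R) = k • of fun _ _ => 1 := by
  ext i j
  simp [mul_apply, hrow]

theorem of_one_mul_transpose_of_sum_row [Fintype n] [NonAssocSemiring R] {A : Matrix m n R} {k : R}
    (hrow : ∀ i, ∑ j, A i j = k) :
    of (fun _ _ => 1 : l → n → R) * Aᵀ = k • of fun _ _ => 1 := by
  ext i j
  simp [mul_apply, hrow]

theorem of_one_mul_of_one [Fintype n] [NonAssocSemiring R] :
    of (fun _ _ => 1 : m → n → R) * of (fun _ _ => 1 : n → l → R) =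
      (Fintype.card n : R) • of fun _ _ => 1 := by
  ext i j
  simp [mul_apply]

theorem conjTranspose_eq_transpose_of_forall_star [Star R] {A : Matrix m n R}
    (hA : ∀ i j, star (A i j) = A i j) : Aᴴ = Aᵀ := by
  ext i j
  exact hA j i

theorem of_ite_eq_zero_eq_smul_add_smul [Ring R] [DecidableEq R] {A : Matrix m n R}
    (hA : ∀ i j, A i j = 0 ∨ A i j = 1) (a : R) :
    of (fun i j => if A i j = 0 then a else A i j) = (1 - a) • A + a • of fun _ _ => 1 := by
  ext i j
  rcases hA i j with h | h
  · simp [h]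
  · simpa [h] using fun h10 => eq_of_zero_eq_one h10.symm _ _

theorem one_sub_smul_add_smul_of_one_mul_conjTranspose [Fintype n] [DecidableEq n] [CommRing R]
    [StarRing R] {U : Matrix n n R} {k μ ν : R} (hU : ∀ i j, star (U i j) = U i j)
    (hrow : ∀ i, ∑ j, U i j = k) (hdes : U * Uᵀ = μ • 1 + ν • of fun _ _ => 1)
    {a : R} (ha : a * star a = 1) :
    ((1 - a) • U + a • of fun _ _ => 1) * ((1 - a) • U + a • of fun _ _ => 1)ᴴ =
      ((2 - (a + star a)) * μ) • 1 +
        ((2 - (a + star a)) * (ν - k) + Fintype.card n) • of fun _ _ => 1 := by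
  have hJ : (of fun _ _ => 1 : Matrix n n R)ᴴ = of fun _ _ => 1 := by
    ext i j; simp
  simp only [conjTranspose_add, conjTranspose_smul, hJ,
    conjTranspose_eq_transpose_of_forall_star hU, add_mul, mul_add, smul_mul, Matrix.mul_smul,
    hdes, mul_of_one_of_sum_row hrow, of_one_mul_transpose_of_sum_row hrow, of_one_mul_of_one,
    smul_add, smul_smul, star_sub, star_one]
  linear_combination (norm := module)
    μ • ha • (1 : Matrix n n R) +
      (ν - 2 * k + Fintype.card n) • ha • (of fun _ _ => 1 : Matrix n n R)

end Matrix

noncomputable def designFill (m : ℕ) (ε : ℝ) : ℂ :=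
  -1 + 1 / (2 * m) + ε * Complex.I * Real.sqrt (4 * m - 1) / (2 * m)

section designFill

variable (m : ℕ) (ε : ℝ)

theorem designFill_eq_ofReal_add_ofReal_mul_I :
    designFill m ε = ((-1 + 1 / (2 * m) : ℝ) : ℂ) +
      ((ε * Real.sqrt (4 * m - 1) / (2 * m) : ℝ) : ℂ) * Complex.I := by
  rw [designFill]; push_cast; ring

theorem designFill_re : (designFill m ε).re = -1 + 1 / (2 * m) := by
  rw [designFill_eq_ofReal_add_ofReal_mul_I, Complex.add_re, Complex.ofReal_re, Complex.mul_I_re,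
    Complex.ofReal_im, neg_zero, add_zero]

theorem designFill_im : (designFill m ε).im = ε * Real.sqrt (4 * m - 1) / (2 * m) := by
  rw [designFill_eq_ofReal_add_ofReal_mul_I, Complex.add_im, Complex.ofReal_im, Complex.mul_I_im,
    Complex.ofReal_re, zero_add]

theorem designFill_add_conj : designFill m ε + star (designFill m ε) = -2 + 1 / (m : ℂ) := by
  rw [Complex.star_def, Complex.add_conj, designFill_re]
  push_cast
  ring

variable {m ε} in
theorem designFill_mul_conj (hm : 1 ≤ m) (hε : ε ^ 2 = 1) :
    designFill m ε * star (designFill m ε) = 1 := by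
  have hm' : (1 : ℝ) ≤ m := by exact_mod_cast hm
  have hsqrt : Real.sqrt (4 * m - 1) ^ 2 = 4 * m - 1 := Real.sq_sqrt (by linarith)
  rw [Complex.star_def, Complex.mul_conj, Complex.normSq_apply, designFill_re, designFill_im,
    Complex.ofReal_eq_one]
  generalize Real.sqrt (4 * m - 1) = s at hsqrt ⊢
  field_simp
  linear_combination (4 * (m : ℝ) - 1) * hε + ε ^ 2 * hsqrt

end designFill

theorem stmt3 (m : ℕ) (hm : 1 ≤ m)
    (U : Matrix (Fin (4 * m - 1)) (Fin (4 * m - 1)) ℂ)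
    (hent : ∀ i j, U i j = 0 ∨ U i j = 1)
    (hrow : ∀ i, ∑ j, U i j = ((2 * m - 1 : ℕ) : ℂ))
    (hdes : U * U.transpose =
      (m : ℂ) • 1 + ((m : ℂ) - 1) • Matrix.of (fun _ _ => (1 : ℂ)))
    (ε : ℝ) (hε : ε = 1 ∨ ε = -1)
    (a : ℂ) (haval : a = -1 + 1 / (2 * m) + ε * Complex.I * Real.sqrt (4 * m - 1) / (2 * m)) :
    IsCHadamard (Matrix.of fun i j => if U i j = 0 then a else U i j) := by
  change a = designFill m ε at haval
  have hε2 : ε ^ 2 = 1 := by rcases hε with rfl | rfl <;> norm_num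
  have hmul : a * star a = 1 := haval ▸ designFill_mul_conj hm hε2
  have hadd : a + star a = -2 + 1 / (m : ℂ) := haval ▸ designFill_add_conj m ε
  have hnorm : ‖a‖ = 1 := by
    rw [← pow_eq_one_iff_of_nonneg (norm_nonneg a) two_ne_zero, ← Complex.ofReal_inj,
      Complex.ofReal_pow, ← Complex.mul_conj', Complex.ofReal_one]
    exact hmul
  have hU : ∀ i j, star (U i j) = U i j := fun i j => by rcases hent i j with h | h <;> simp [h]
  refine ⟨fun i j => by rcases hent i j with h | h <;> simp [h, hnorm], ?_⟩
  have hm0 : (m : ℂ) ≠ 0 := Nat.cast_ne_zero.mpr (by omega)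
  rw [of_ite_eq_zero_eq_smul_add_smul hent,
    one_sub_smul_add_smul_of_one_mul_conjTranspose hU hrow hdes hmul, hadd,
    Fintype.card_fin, Nat.cast_sub (by omega), Nat.cast_sub (by omega)]
  push_cast
  have hdiag : (2 - (-2 + 1 / (m : ℂ))) * m = 4 * m - 1 := by field_simp; ring
  have hoff : (2 - (-2 + 1 / (m : ℂ))) * (m - 1 - (2 * m - 1)) + (4 * m - 1) = 0 := by
    field_simp; ring
  rw [hdiag, hoff, zero_smul, add_zero]
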